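/- arXiv:2507.17470 — 3 statements merged into one kernel-verified Lean document; each statement's English description precedes it below -/
import Mathlib

section
/- For positive integers a > b and a real number x with 0 < x ≤ b/a, the partial binomial sum satisfies ∑_{i=b}^{a} C(a,i) x^i ≤ (e·a·x/b)^b, where e is Euler's number. -/
/-!
For `i ≥ b` and `0 ≤ x ≤ t` we have `x ^ i ≤ (x / t) ^ b * t ^ i`, so the tail of the binomial
sum at `x` is at most `(x / t) ^ b` times the full binomial sum `(1 + t) ^ a`. Choosing
`t = b / a` gives `(1 + b / a) ^ a ≤ e ^ b`, and `(x / t) ^ b * e ^ b = (e * a * x / b) ^ b`.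
-/

open Finset Real

lemma pow_le_div_pow_mul_pow {x t : ℝ} (hx : 0 ≤ x) (hxt : x ≤ t) {b i : ℕ} (hbi : b ≤ i) :
    x ^ i ≤ (x / t) ^ b * t ^ i := by
  have hxt' : x / t * t = x := div_mul_cancel_of_imp fun ht ↦ le_antisymm (ht ▸ hxt) hx
  calc x ^ i = x ^ b * x ^ (i - b) := by rw [← pow_add, Nat.add_sub_cancel' hbi]
    _ ≤ x ^ b * t ^ (i - b) := by gcongr
    _ = (x / t) ^ b * t ^ i := by
      rw [← hxt', mul_pow, hxt', mul_assoc, ← pow_add, Nat.add_sub_cancel' hbi]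

lemma sum_Icc_choose_mul_pow_le {x t : ℝ} (hx : 0 ≤ x) (hxt : x ≤ t) (a b : ℕ) :
    ∑ i ∈ Icc b a, (a.choose i : ℝ) * x ^ i ≤ (x / t) ^ b * (1 + t) ^ a := by
  have ht : 0 ≤ t := hx.trans hxt
  calc ∑ i ∈ Icc b a, (a.choose i : ℝ) * x ^ i
      ≤ ∑ i ∈ Icc b a, (x / t) ^ b * ((a.choose i : ℝ) * t ^ i) := by
        refine sum_le_sum fun i hi ↦ ?_
        rw [mul_left_comm]
        gcongr
        exact pow_le_div_pow_mul_pow hx hxt (mem_Icc.1 hi).1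
    _ ≤ (x / t) ^ b * ∑ i ∈ range (a + 1), (a.choose i : ℝ) * t ^ i := by
        rw [← mul_sum]
        gcongr
        intro i hi
        simp only [mem_Icc, mem_range] at hi ⊢
        omega
    _ = (x / t) ^ b * (1 + t) ^ a := by
        rw [add_comm 1 t, add_pow]
        simp only [one_pow, mul_one, mul_comm]

lemma one_add_div_pow_le_exp {n : ℕ} {s : ℝ} (hs : -s ≤ n) : (1 + s / n) ^ n ≤ exp s := by
  simpa [sub_eq_add_neg, neg_div] using one_sub_div_pow_le_exp_neg hs

theorem binomial_tail_bound_general (a b : ℕ) (x : ℝ) (hx : 0 < x)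
    (hxb : x ≤ (b : ℝ) / a) :
    ∑ i ∈ Finset.Icc b a, (a.choose i : ℝ) * x ^ i ≤
      (Real.exp 1 * a * x / b) ^ b := by
  have hba : 0 < (b : ℝ) / a := hx.trans_le hxb
  have ha : (a : ℝ) ≠ 0 := by rintro h; simp [h] at hba
  have hb : (b : ℝ) ≠ 0 := by rintro h; simp [h] at hba
  calc ∑ i ∈ Icc b a, (a.choose i : ℝ) * x ^ i
      ≤ (x / (b / a)) ^ b * (1 + b / a) ^ a := sum_Icc_choose_mul_pow_le hx.le hxb a b
    _ ≤ (x / (b / a)) ^ b * exp 1 ^ b := by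
        rw [exp_one_pow]
        gcongr
        exact one_add_div_pow_le_exp ((neg_nonpos.2 b.cast_nonneg).trans a.cast_nonneg)
    _ = (exp 1 * a * x / b) ^ b := by
        rw [← mul_pow]
        field_simp

theorem binomial_tail_bound (a b : ℕ) (hb : 0 < b) (hab : b < a) (x : ℝ) (hx : 0 < x)
    (hxb : x ≤ (b : ℝ) / a) :
    ∑ i ∈ Finset.Icc b a, (a.choose i : ℝ) * x ^ i ≤
      (Real.exp 1 * a * x / b) ^ b :=
  binomial_tail_bound_general a b x hx hxb
end

section
/- For natural numbers d ≥ Λ ≥ 1 and any real q with 0 ≤ q ≤ 1, the weighted sum over the truncated frequency set satisfies ∑_{ω ∈ 𝔠(Λ)} q^{2‖ω‖₀} = ∑_{k=0}^{Λ} C(d,k)·2^k·q^{2k} ≤ (d·e^{2q²}/Λ)^Λ. -/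
/-!
Grouping the frequencies by the size `k` of their support gives the identity: there are `C(d, k)`
supports of size `k`, and `2 ^ k` sign patterns on each. For the bound put `r = Λ / d ≤ 1` and
`y = 2 q²`; since `r ^ Λ ≤ r ^ k` for `k ≤ Λ`,
`r ^ Λ ∑_{k ≤ Λ} C(d, k) y ^ k ≤ ∑_{k ≤ d} C(d, k) (r y) ^ k = (1 + r y) ^ d`,
and `(1 + r y) ^ d ≤ exp (r y d) = exp y ^ Λ`.
-/

open Finset

theorem sum_filter_le_comp_eq_sum_range {α M : Type*} [AddCommMonoid M] (s : Finset α)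
    (g : α → ℕ) (f : ℕ → M) (n : ℕ) :
    ∑ x ∈ s with g x ≤ n, f (g x) =
      ∑ k ∈ range (n + 1), #{x ∈ s | g x = k} • f k := by
  rw [← sum_fiberwise_of_maps_to (g := g) (t := range (n + 1))
    fun x hx => mem_range_succ_iff.2 (mem_filter.1 hx).2]
  refine sum_congr rfl fun k hk => ?_
  rw [filter_filter, sum_congr rfl fun x hx => by rw [(mem_filter.1 hx).2.2], sum_const]
  congr 2
  exact filter_congr fun x _ => ⟨And.right, fun h => ⟨h ▸ mem_range_succ_iff.1 hk, h⟩⟩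

section Counting

variable {ι β : Type*} [Fintype ι] [DecidableEq ι] [Fintype β]
  (p : β → Prop) [DecidablePred p]

theorem card_filter_fun_filter_eq (T : Finset ι) :
    #{ω : ι → β | ({i | p (ω i)} : Finset ι) = T} =
      #{b | p b} ^ #T * #{b | ¬p b} ^ (Fintype.card ι - #T) := by
  have hfiber : ({ω : ι → β | ({i | p (ω i)} : Finset ι) = T} : Finset (ι → β)) =
      Fintype.piFinset fun i =>
        if i ∈ T then ({b | p b} : Finset β) else ({b | ¬p b} : Finset β) := by
    ext ω
    simp only [mem_filter, mem_univ, true_and, Fintype.mem_piFinset, Finset.ext_iff]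
    refine forall_congr' fun i => ?_
    by_cases hi : i ∈ T <;> simp [hi]
  rw [hfiber, Fintype.card_piFinset]
  simp only [apply_ite card, prod_ite, prod_const, filter_mem_eq_inter, univ_inter,
    filter_not, card_univ_sdiff]

theorem card_filter_card_fun_filter_eq (k : ℕ) :
    #{ω : ι → β | #{i | p (ω i)} = k} =
      (Fintype.card ι).choose k * #{b | p b} ^ k * #{b | ¬p b} ^ (Fintype.card ι - k) := by
  rw [card_eq_sum_card_fiberwise (f := fun ω : ι → β => ({i | p (ω i)} : Finset ι))
    (t := powersetCard k univ)
    fun ω hω => mem_powersetCard.2 ⟨subset_univ _, (mem_filter.1 hω).2⟩]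
  have hfiber : ∀ T ∈ powersetCard k (univ : Finset ι),
      #{ω ∈ ({ω : ι → β | #{i | p (ω i)} = k} : Finset (ι → β)) |
          ({i | p (ω i)} : Finset ι) = T}
        = #{b | p b} ^ k * #{b | ¬p b} ^ (Fintype.card ι - k) := by
    intro T hT
    rw [(mem_powersetCard.1 hT).2.symm, ← card_filter_fun_filter_eq, filter_filter]
    congr 1
    exact filter_congr fun ω _ => ⟨And.right, fun h => ⟨h ▸ rfl, h⟩⟩
  rw [sum_congr rfl hfiber, sum_const, card_powersetCard, card_univ, smul_eq_mul,
    mul_assoc]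

end Counting

theorem sum_range_choose_mul_pow_le_one_add_pow {a b : ℕ} (hba : b ≤ a) {x : ℝ}
    (hx : 0 ≤ x) :
    ∑ k ∈ range (b + 1), (a.choose k : ℝ) * x ^ k ≤ (1 + x) ^ a :=
  calc ∑ k ∈ range (b + 1), (a.choose k : ℝ) * x ^ k
      ≤ ∑ k ∈ range (a + 1), (a.choose k : ℝ) * x ^ k :=
        sum_le_sum_of_subset_of_nonneg (range_subset_range.2 (by omega))
          fun k _ _ => by positivity
    _ = (1 + x) ^ a := by
        rw [add_comm 1 x, add_pow]
        simp only [one_pow, mul_one, mul_comm]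

theorem sum_range_choose_mul_pow_le {a b : ℕ} (hba : b ≤ a) {y : ℝ} (hy : 0 ≤ y) :
    ∑ k ∈ range (b + 1), (a.choose k : ℝ) * y ^ k ≤ ((a : ℝ) * Real.exp y / b) ^ b := by
  rcases Nat.eq_zero_or_pos b with rfl | hb
  · simp
  have hb0 : (0 : ℝ) < b := by exact_mod_cast hb
  have ha0 : (0 : ℝ) < a := hb0.trans_le (by exact_mod_cast hba)
  set r : ℝ := b / a with hr
  have hr0 : 0 ≤ r := by positivity
  have hr1 : r ≤ 1 := div_le_one_of_le₀ (by exact_mod_cast hba) ha0.le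
  have hscale : (a / b : ℝ) ^ b * r ^ b = 1 := by
    rw [← mul_pow, hr, div_mul_div_comm, mul_comm (a : ℝ), div_self (by positivity), one_pow]
  calc ∑ k ∈ range (b + 1), (a.choose k : ℝ) * y ^ k
      = (a / b : ℝ) ^ b * ∑ k ∈ range (b + 1), (a.choose k : ℝ) * y ^ k * r ^ b := by
        rw [← sum_mul, mul_left_comm, hscale, mul_one]
    _ ≤ (a / b : ℝ) ^ b * ∑ k ∈ range (b + 1), (a.choose k : ℝ) * (y * r) ^ k := by
        refine mul_le_mul_of_nonneg_left (sum_le_sum fun k hk => ?_) (by positivity)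
        rw [mul_assoc, mul_pow]
        gcongr _ * (_ * ?_)
        exact pow_le_pow_of_le_one hr0 hr1 (mem_range_succ_iff.1 hk)
    _ ≤ (a / b : ℝ) ^ b * (1 + y * r) ^ a := by
        gcongr
        exact sum_range_choose_mul_pow_le_one_add_pow hba (by positivity)
    _ ≤ (a / b : ℝ) ^ b * Real.exp (y * r) ^ a := by
        gcongr
        linarith [Real.add_one_le_exp (y * r)]
    _ = ((a : ℝ) * Real.exp y / b) ^ b := by
        rw [← Real.exp_nat_mul, show (a : ℝ) * (y * r) = b * y by rw [hr]; field_simp,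
          Real.exp_nat_mul, ← mul_pow, div_mul_eq_mul_div]

theorem truncated_frequency_weighted_sum_general (d Λ : ℕ) (hd : Λ ≤ d)
    (q : ℝ) :
    (∑ ω ∈ Finset.univ.filter (fun ω : Fin d → ({-1, 0, 1} : Finset ℤ) =>
        (Finset.univ.filter fun i => (ω i : ℤ) ≠ 0).card ≤ Λ),
        q ^ (2 * (Finset.univ.filter fun i => (ω i : ℤ) ≠ 0).card))
      = ∑ k ∈ Finset.range (Λ + 1), (d.choose k : ℝ) * 2 ^ k * q ^ (2 * k) ∧
    ∑ k ∈ Finset.range (Λ + 1), (d.choose k : ℝ) * 2 ^ k * q ^ (2 * k) ≤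
      ((d : ℝ) * Real.exp (2 * q ^ 2) / Λ) ^ Λ := by
  have hcount (k : ℕ) :
      #{ω : Fin d → ({-1, 0, 1} : Finset ℤ) | #{i | (ω i : ℤ) ≠ 0} = k} =
        d.choose k * 2 ^ k := by
    rw [card_filter_card_fun_filter_eq (fun b : ({-1, 0, 1} : Finset ℤ) => (b : ℤ) ≠ 0),
      Fintype.card_fin, (by decide : #{b : ({-1, 0, 1} : Finset ℤ) | (b : ℤ) ≠ 0} = 2),
      (by decide : #{b : ({-1, 0, 1} : Finset ℤ) | ¬(b : ℤ) ≠ 0} = 1), one_pow, mul_one]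
  refine ⟨?_, ?_⟩
  · rw [sum_filter_le_comp_eq_sum_range _
      (fun ω : Fin d → ({-1, 0, 1} : Finset ℤ) => #{i | (ω i : ℤ) ≠ 0})
      fun k => q ^ (2 * k)]
    refine sum_congr rfl fun k _ => ?_
    rw [hcount, nsmul_eq_mul]
    push_cast
    ring
  · calc ∑ k ∈ range (Λ + 1), (d.choose k : ℝ) * 2 ^ k * q ^ (2 * k)
        = ∑ k ∈ range (Λ + 1), (d.choose k : ℝ) * (2 * q ^ 2) ^ k := by
          simp only [mul_pow, pow_mul, mul_assoc]
      _ ≤ _ := sum_range_choose_mul_pow_le hd (by positivity)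

theorem truncated_frequency_weighted_sum (d Λ : ℕ) (hΛ : 1 ≤ Λ) (hd : Λ ≤ d)
    (q : ℝ) (hq0 : 0 ≤ q) (hq1 : q ≤ 1) :
    (∑ ω ∈ Finset.univ.filter (fun ω : Fin d → ({-1, 0, 1} : Finset ℤ) =>
        (Finset.univ.filter fun i => (ω i : ℤ) ≠ 0).card ≤ Λ),
        q ^ (2 * (Finset.univ.filter fun i => (ω i : ℤ) ≠ 0).card))
      = ∑ k ∈ Finset.range (Λ + 1), (d.choose k : ℝ) * 2 ^ k * q ^ (2 * k) ∧
    ∑ k ∈ Finset.range (Λ + 1), (d.choose k : ℝ) * 2 ^ k * q ^ (2 * k) ≤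
      ((d : ℝ) * Real.exp (2 * q ^ 2) / Λ) ^ Λ :=
  truncated_frequency_weighted_sum_general d Λ hd q
end

section
/- Let d, Λ be natural numbers with Λ + 1 ≤ d, and let q, R, B > 0 be reals satisfying q(1+R) ≤ (Λ+1)/d. Then B · ∑_{a=Λ+1}^{d} ∑_{b=0}^{a} C(d,a)·C(a,b)·q^a·R^b ≤ B·(e·d·q·(1+R)/(Λ+1))^{Λ+1}. -/
/-!
The inner sum over `b` is the binomial expansion of `(1 + R)^a`, so the left side is the
binomial tail `∑_{a ≥ Λ+1} C(d,a) y^a` with `y = q(1 + R)`. Weighting the `a`-th term by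
`t^(a-Λ-1) ≥ 1` bounds this tail by `(1 + t y)^d / t^(Λ+1) ≤ e^(t y d) / t^(Λ+1)`, and the
choice `t = (Λ+1)/(y d)`, which is `≥ 1` exactly by the hypothesis on `q(1 + R)`, gives the
claim.
-/

open Finset Real

theorem sum_range_choose_mul_pow {R : Type*} [CommSemiring R] (x : R) (n : ℕ) :
    ∑ m ∈ range (n + 1), (n.choose m : R) * x ^ m = (1 + x) ^ n := by
  rw [add_comm 1 x, add_pow]
  exact sum_congr rfl fun m _ => by rw [one_pow, mul_one, mul_comm]

theorem sum_Icc_choose_mul_pow_le_one_add_pow_div {y t : ℝ} (hy : 0 ≤ y) (ht : 1 ≤ t)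
    (k d : ℕ) :
    ∑ a ∈ Icc k d, (d.choose a : ℝ) * y ^ a ≤ (1 + t * y) ^ d / t ^ k := by
  rw [le_div_iff₀ (by positivity), sum_mul, ← sum_range_choose_mul_pow]
  calc ∑ a ∈ Icc k d, (d.choose a : ℝ) * y ^ a * t ^ k
      ≤ ∑ a ∈ Icc k d, (d.choose a : ℝ) * y ^ a * t ^ a :=
        sum_le_sum fun a ha => by gcongr; exact (mem_Icc.mp ha).1
    _ = ∑ a ∈ Icc k d, (d.choose a : ℝ) * (t * y) ^ a := sum_congr rfl fun a _ => by ring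
    _ ≤ ∑ a ∈ range (d + 1), (d.choose a : ℝ) * (t * y) ^ a :=
        sum_le_sum_of_subset_of_nonneg (fun a ha => by grind) fun _ _ _ => by positivity

theorem sum_Icc_choose_mul_pow_le_s8 {y : ℝ} (hy : 0 < y) {k d : ℕ} (hd : 0 < d)
    (hyd : y * d ≤ k) :
    ∑ a ∈ Icc k d, (d.choose a : ℝ) * y ^ a ≤ (exp 1 * d * y / k) ^ k := by
  set t : ℝ := k / (y * d) with ht_def
  have ht : 1 ≤ t := (one_le_div (by positivity)).2 hyd
  have htyd : d * (t * y) = k := by rw [ht_def]; field_simp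
  calc ∑ a ∈ Icc k d, (d.choose a : ℝ) * y ^ a ≤ (1 + t * y) ^ d / t ^ k :=
        sum_Icc_choose_mul_pow_le_one_add_pow_div hy.le ht k d
    _ ≤ exp (d * (t * y)) / t ^ k := by
        rw [exp_nat_mul]
        gcongr
        linarith [add_one_le_exp (t * y)]
    _ = (exp 1 * d * y / k) ^ k := by
        rw [htyd, ← mul_one (k : ℝ), exp_nat_mul, ← div_pow, ht_def]
        congr 1
        field_simp

theorem truncation_error_bound (d Λ : ℕ) (hΛd : Λ + 1 ≤ d) (q R B : ℝ)
    (hq : 0 < q) (hR : 0 < R) (hB : 0 < B)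
    (h : q * (1 + R) ≤ ((Λ : ℝ) + 1) / d) :
    B * ∑ a ∈ Finset.Icc (Λ + 1) d, ∑ b ∈ Finset.range (a + 1),
        (d.choose a : ℝ) * (a.choose b : ℝ) * q ^ a * R ^ b
      ≤ B * (Real.exp 1 * d * q * (1 + R) / ((Λ : ℝ) + 1)) ^ (Λ + 1) := by
  have hd : 0 < d := by omega
  have inner_sum (a : ℕ) :
      ∑ b ∈ range (a + 1), (d.choose a : ℝ) * (a.choose b : ℝ) * q ^ a * R ^ b
        = d.choose a * (q * (1 + R)) ^ a := by
    rw [mul_pow, ← sum_range_choose_mul_pow, mul_sum, mul_sum]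
    exact sum_congr rfl fun b _ => by ring
  have hyd : q * (1 + R) * d ≤ (Λ + 1 : ℕ) := by
    push_cast
    exact (le_div_iff₀ (by positivity)).1 h
  simp_rw [inner_sum]
  gcongr
  calc ∑ a ∈ Icc (Λ + 1) d, (d.choose a : ℝ) * (q * (1 + R)) ^ a
      ≤ (exp 1 * d * (q * (1 + R)) / (Λ + 1 : ℕ)) ^ (Λ + 1) :=
        sum_Icc_choose_mul_pow_le_s8 (by positivity) hd hyd
    _ = (exp 1 * d * q * (1 + R) / ((Λ : ℝ) + 1)) ^ (Λ + 1) := by push_cast; ring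
end
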